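/- arXiv:1509.01301 — 4 statements merged into one kernel-verified Lean document; each statement's English description precedes it below -/
import Mathlib

section
/- An oriented graph D has an excellent cyclic ordering if and only if D can be extended, by adding new arcs between non-adjacent vertices, to a local tournament that admits a round ordering. Moreover, every excellent ordering of D is a round ordering of such an extension and conversely. -/
/-!
Relabel the vertices along the cyclic ordering by `ZMod n`, so that the position of `j` seen
from `i` is `(j - i).val`; every cyclic-order argument then becomes linear arithmetic once the
change of base point `(z - x).val ≡ (z - y).val + (y - x).val (mod n)` is recorded.

If the ordering is excellent, join `i → j` whenever `j` comes strictly after `i` inside the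
cyclic interval spanned by some arc `p → q`. Excellence says exactly that this reverses no arc
and joins no pair both ways, and the out- and in-neighbourhoods it produces are intervals next
to the vertex, so the ordering is round. Conversely, in a round ordering, arcs `i → j` and
`s → t` in the forbidden position give `i → s`, and also `s → i`, since the out-interval of `s`
reaches `t` and hence `i`. Finally every round ordering of an oriented graph makes it a local
tournament: two out-neighbours of `v` both lie in the in-interval of the later one.
-/

/-- An oriented graph: an asymmetric (hence irreflexive) arc relation. -/
def IsOrientedGraph {V : Type*} (A : V → V → Prop) : Prop :=
  ∀ u v : V, A u v → ¬ A v u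

/-- A tournament: an oriented graph with an arc between any two distinct vertices. -/
def IsTournament {V : Type*} (A : V → V → Prop) : Prop :=
  IsOrientedGraph A ∧ ∀ u v : V, u ≠ v → A u v ∨ A v u

/-- A local tournament: every out-neighbourhood and every in-neighbourhood
induces a tournament. -/
def IsLocalTournament {V : Type*} (A : V → V → Prop) : Prop :=
  IsOrientedGraph A ∧
  (∀ v x y : V, A v x → A v y → x ≠ y → A x y ∨ A y x) ∧
  (∀ v x y : V, A x v → A y v → x ≠ y → A x y ∨ A y x)

/-- Local transitivity: the arc relation is transitive when restricted to the
out-neighbourhood of any vertex and to the in-neighbourhood of any vertex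
(so these neighbourhoods induce transitive, i.e. triangle-free, subtournaments). -/
def IsLocallyTransitive {V : Type*} (A : V → V → Prop) : Prop :=
  (∀ v x y z : V, A v x → A v y → A v z → A x y → A y z → A x z) ∧
  (∀ v x y z : V, A x v → A y v → A z v → A x y → A y z → A x z)

/-- A directed cycle of `A` all of whose vertices lie in `S`. -/
def HasCycleIn {V : Type*} (A : V → V → Prop) (S : Set V) : Prop :=
  ∃ (n : ℕ) (f : ZMod n → V), 2 ≤ n ∧ Function.Injective f ∧
    (∀ i, f i ∈ S) ∧ ∀ i : ZMod n, A (f i) (f (i + 1))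

/-- A directed cycle somewhere in `A`. -/
def HasDirectedCycle {V : Type*} (A : V → V → Prop) : Prop :=
  HasCycleIn A Set.univ

/-- A partially oriented graph (pog): a symmetric loopless edge relation `E`
together with an asymmetric arc relation `A`, no pair of vertices being joined
by both an edge and an arc. -/
def IsPog {V : Type*} (E A : V → V → Prop) : Prop :=
  (∀ u v : V, E u v → E v u) ∧ (∀ v : V, ¬ E v v) ∧ IsOrientedGraph A ∧
  (∀ u v : V, E u v → ¬ A u v ∧ ¬ A v u)

/-- `D` is a completion of the pog `(E, A)`: it keeps every arc of `A`,
orients every edge of `E` (in exactly one direction), and contains nothing else. -/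
def IsCompletion {V : Type*} (E A D : V → V → Prop) : Prop :=
  IsOrientedGraph D ∧
  (∀ u v : V, A u v → D u v) ∧
  (∀ u v : V, E u v → D u v ∨ D v u) ∧
  (∀ u v : V, D u v → A u v ∨ E u v)

/-- `T` is obtained from the oriented graph `A` by adding arcs between
non-adjacent pairs only (no arc of `A` is reversed), the result being a
tournament.  This is exactly a completion of the partially oriented complete
graph `A^c` to a tournament. -/
def CompletesToTournament {V : Type*} (A T : V → V → Prop) : Prop :=
  (∀ u v : V, A u v → T u v) ∧ (∀ u v : V, T u v → ¬ A v u) ∧ IsTournament T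

/-- A round ordering of the arc relation `A`: a cyclic ordering (a bijection
from `ZMod n`) in which the out-neighbours of each vertex appear consecutively
immediately after it and its in-neighbours consecutively immediately before it. -/
def IsRoundOrdering {V : Type*} (A : V → V → Prop) {n : ℕ} (f : ZMod n → V) : Prop :=
  Function.Bijective f ∧
  (∀ i j : ZMod n, A (f i) (f j) ↔ 1 ≤ (j - i).val ∧ (j - i).val ≤ {u | A (f i) u}.ncard) ∧
  (∀ i j : ZMod n, A (f j) (f i) ↔ 1 ≤ (i - j).val ∧ (i - j).val ≤ {u | A u (f i)}.ncard)

/-- The cyclic ordering given by `f : ZMod n → V` is excellent for the arc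
relation `A`: there is no pair of arcs `(f i, f j)`, `(f s, f t)` whose vertices
occur in the cyclic order `f i, f t, f s, f j` (positions measured from `i`;
the degenerate cases `i = t` and `s = j` are allowed). -/
def IsExcellent {V : Type*} (A : V → V → Prop) {n : ℕ} (f : ZMod n → V) : Prop :=
  ¬ ∃ i j s t : ZMod n, A (f i) (f j) ∧ A (f s) (f t) ∧
      (t - i).val ≤ (s - i).val ∧ (s - i).val ≤ (j - i).val

/-- `A'` is obtained from `A` by adding new arcs between non-adjacent
vertices only (no arc is reversed and every old arc is kept). -/
def ExtendsByNewArcs {V : Type*} (A A' : V → V → Prop) : Prop :=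
  (∀ u v : V, A u v → A' u v) ∧ (∀ u v : V, A' u v → ¬ A v u)

open Function

namespace ZMod

variable {n : ℕ}

theorem one_le_val_sub {x y : ZMod n} (h : x ≠ y) : 1 ≤ (x - y).val :=
  val_pos.mpr (sub_ne_zero.mpr h)

variable [NeZero n]

theorem val_sub_eq_or (x y z : ZMod n) :
    (z - x).val = (z - y).val + (y - x).val ∨ (z - x).val + n = (z - y).val + (y - x).val := by
  rw [← sub_add_sub_cancel z y x]
  rcases lt_or_ge ((z - y).val + (y - x).val) n with h | h
  · exact .inl (val_add_of_lt h)
  · exact .inr (val_add_val_of_le h).symm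

theorem val_sub_add_val_sub_of_ne {x y : ZMod n} (h : x ≠ y) : (x - y).val + (y - x).val = n := by
  have := one_le_val_sub h
  rcases val_sub_eq_or y x y with h' | h' <;> simp only [sub_self, val_zero] at h' <;> omega

theorem ncard_setOf_one_le_val_le (g : ZMod n ≃ ZMod n) {m : ℕ} (hm : m < n) :
    {k | 1 ≤ (g k).val ∧ (g k).val ≤ m}.ncard = m := by
  have hrange : Set.Icc 1 m ⊆ Set.range (val : ZMod n → ℕ) :=
    fun k hk => ⟨k, val_cast_of_lt (hk.2.trans_lt hm)⟩
  change (g ⁻¹' (val ⁻¹' Set.Icc 1 m)).ncard = m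
  rw [Set.ncard_preimage_of_injective_subset_range g.injective (by simp),
    Set.ncard_preimage_of_injective_subset_range (val_injective n) hrange, Set.ncard_Icc_nat]
  omega

theorem mem_iff_one_le_val_le_ncard (g : ZMod n ≃ ZMod n) {S : Set (ZMod n)}
    (hpos : ∀ j ∈ S, 1 ≤ (g j).val)
    (hdown : ∀ j ∈ S, ∀ k, 1 ≤ (g k).val → (g k).val ≤ (g j).val → k ∈ S) (j : ZMod n) :
    j ∈ S ↔ 1 ≤ (g j).val ∧ (g j).val ≤ S.ncard := by
  constructor
  · intro hj
    refine ⟨hpos j hj, ?_⟩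
    calc (g j).val = {k | 1 ≤ (g k).val ∧ (g k).val ≤ (g j).val}.ncard :=
          (ncard_setOf_one_le_val_le g (val_lt _)).symm
      _ ≤ S.ncard := Set.ncard_le_ncard (fun k hk => hdown j hj k hk.1 hk.2) (Set.toFinite S)
  · rintro ⟨h1, h2⟩
    by_contra hj
    have hsub : S ⊆ {k | 1 ≤ (g k).val ∧ (g k).val ≤ (g j).val - 1} := fun k hk =>
      ⟨hpos k hk, by by_contra hlt; exact hj (hdown k hk j h1 (by omega))⟩
    have := Set.ncard_le_ncard hsub (Set.toFinite _)
    rw [ncard_setOf_one_le_val_le g (by have := val_lt (g j); omega)] at this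
    omega

end ZMod

theorem neZero_of_injective {V : Type*} [Finite V] {n : ℕ} {f : ZMod n → V}
    (hf : Injective f) : NeZero n :=
  ⟨by
    rintro rfl
    have := Finite.of_injective f hf
    exact not_finite (ZMod 0)⟩

namespace IsRoundOrdering

variable {V : Type*} {R : V → V → Prop} {n : ℕ} {f : ZMod n → V}

theorem onFun_symm {W : Type*} (h : IsRoundOrdering R f) (e : V ≃ W) :
    IsRoundOrdering (R on e.symm) (e ∘ f) := by
  obtain ⟨hf, hout, hin⟩ := h
  have hcard : ∀ s : Set V, (e.symm ⁻¹' s).ncard = s.ncard := fun s =>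
    Set.ncard_preimage_of_injective_subset_range e.symm.injective (by simp)
  refine ⟨e.bijective.comp hf, fun i j => ?_, fun i j => ?_⟩
  · rw [show {u | (R on e.symm) ((e ∘ f) i) u} = e.symm ⁻¹' {v | R (f i) v} by ext; simp [onFun],
      hcard]
    simpa [onFun] using hout i j
  · rw [show {u | (R on e.symm) u ((e ∘ f) i)} = e.symm ⁻¹' {v | R v (f i)} by ext; simp [onFun],
      hcard]
    simpa [onFun] using hin i j

variable [NeZero n]

theorem rel_of_out_rel_of_val_sub_lt (h : IsRoundOrdering R f) {a b c : ZMod n}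
    (hab : R (f a) (f b)) (hac : R (f a) (f c)) (hlt : (b - a).val < (c - a).val) :
    R (f b) (f c) := by
  have hb := (h.2.1 a b).1 hab
  have hc := (h.2.2 c a).1 hac
  have := ZMod.val_lt (c - b)
  refine (h.2.2 c b).2 ?_
  rcases ZMod.val_sub_eq_or a b c with h' | h' <;> omega

theorem rel_of_in_rel_of_val_sub_lt (h : IsRoundOrdering R f) {a b c : ZMod n}
    (hba : R (f b) (f a)) (hca : R (f c) (f a)) (hlt : (a - c).val < (a - b).val) :
    R (f b) (f c) := by
  have hb := (h.2.1 b a).1 hba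
  have hc := (h.2.2 a c).1 hca
  have := ZMod.val_lt (c - b)
  refine (h.2.1 b c).2 ?_
  rcases ZMod.val_sub_eq_or b c a with h' | h' <;> omega

theorem isLocalTournament (h : IsRoundOrdering R f) (hR : IsOrientedGraph R) :
    IsLocalTournament R := by
  refine ⟨hR, fun v x y hvx hvy hxy => ?_, fun v x y hxv hyv hxy => ?_⟩
  all_goals
    obtain ⟨a, rfl⟩ := h.1.2 v
    obtain ⟨b, rfl⟩ := h.1.2 x
    obtain ⟨c, rfl⟩ := h.1.2 y
  · rcases lt_trichotomy (b - a).val (c - a).val with hlt | heq | hgt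
    · exact .inl (h.rel_of_out_rel_of_val_sub_lt hvx hvy hlt)
    · exact absurd (congrArg f (sub_left_injective (ZMod.val_injective n heq))) hxy
    · exact .inr (h.rel_of_out_rel_of_val_sub_lt hvy hvx hgt)
  · rcases lt_trichotomy (a - c).val (a - b).val with hlt | heq | hgt
    · exact .inl (h.rel_of_in_rel_of_val_sub_lt hxv hyv hlt)
    · exact absurd (congrArg f (sub_right_injective (ZMod.val_injective n heq))).symm hxy
    · exact .inr (h.rel_of_in_rel_of_val_sub_lt hyv hxv hgt)

theorem isExcellent {A : V → V → Prop} (h : IsRoundOrdering R f) (hR : IsOrientedGraph R)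
    (hAR : ∀ u v, A u v → R u v) : IsExcellent A f := by
  rintro ⟨i, j, s, t, hij, hst, hts, hsj⟩
  have hj := (h.2.1 i j).1 (hAR _ _ hij)
  have ht := (h.2.1 s t).1 (hAR _ _ hst)
  have hsi : s ≠ i := by
    rintro rfl
    rw [sub_self, ZMod.val_zero] at hts
    omega
  have his : R (f i) (f s) := (h.2.1 i s).2 ⟨ZMod.one_le_val_sub hsi, hsj.trans hj.2⟩
  have hsi' : R (f s) (f i) := by
    refine (h.2.1 s i).2 ?_
    have := ZMod.val_sub_add_val_sub_of_ne hsi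
    have := ZMod.val_lt (s - i)
    rcases ZMod.val_sub_eq_or s i t with h' | h' <;> omega
  exact hR _ _ his hsi'

end IsRoundOrdering

section ArcSpan

variable {n : ℕ} {B : ZMod n → ZMod n → Prop}

def arcSpan (B : ZMod n → ZMod n → Prop) (i j : ZMod n) : Prop :=
  ∃ p q, B p q ∧ (i - p).val < (j - p).val ∧ (j - p).val ≤ (q - p).val

theorem arcSpan_of_rel (hB : IsExcellent B id) {i j : ZMod n} (h : B i j) : arcSpan B i j := by
  have hji : j ≠ i := by
    rintro rfl
    exact hB ⟨j, j, j, j, h, h, le_rfl, le_rfl⟩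
  refine ⟨i, j, h, ?_, le_rfl⟩
  rw [sub_self, ZMod.val_zero]
  exact ZMod.one_le_val_sub hji

theorem not_rel_of_arcSpan (hB : IsExcellent B id) {i j : ZMod n} (h : arcSpan B i j) :
    ¬ B j i := by
  obtain ⟨p, q, hpq, hi, hj⟩ := h
  exact fun hji => hB ⟨p, q, j, i, hpq, hji, hi.le, hj⟩

variable [NeZero n]

/-- Two arcs whose spans contain `i → j` and `j → i` cover the whole cycle, so one of
them starts and ends inside the span of the other, in reverse order. -/
theorem isOrientedGraph_arcSpan (hB : IsExcellent B id) : IsOrientedGraph (arcSpan B) := by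
  rintro i j ⟨p, q, hpq, hi, hj⟩ ⟨p', q', hpq', hj', hi'⟩
  have := ZMod.val_lt (p' - p)
  have := ZMod.val_lt (q' - p)
  have := ZMod.val_lt (q' - p')
  rcases ZMod.val_sub_eq_or p p' i with h₁ | h₁ <;>
    rcases ZMod.val_sub_eq_or p p' j with h₂ | h₂ <;>
    rcases ZMod.val_sub_eq_or p p' q' with h₃ | h₃ <;>
    exact hB ⟨p, q, p', q', hpq, hpq', by omega, by omega⟩

theorem arcSpan_of_val_sub_le {i j k : ZMod n} (h : arcSpan B i j) (hk : 1 ≤ (k - i).val)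
    (hkj : (k - i).val ≤ (j - i).val) : arcSpan B i k := by
  obtain ⟨p, q, hpq, hi, hj⟩ := h
  have := ZMod.val_lt (k - p)
  have := ZMod.val_lt (j - p)
  have := ZMod.val_lt (j - i)
  refine ⟨p, q, hpq, ?_, ?_⟩ <;>
    rcases ZMod.val_sub_eq_or p i j with h₁ | h₁ <;>
    rcases ZMod.val_sub_eq_or p i k with h₂ | h₂ <;> omega

theorem arcSpan_of_val_sub_le' {i j k : ZMod n} (h : arcSpan B j i) (hk : 1 ≤ (i - k).val)
    (hkj : (i - k).val ≤ (i - j).val) : arcSpan B k i := by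
  obtain ⟨p, q, hpq, hj, hi⟩ := h
  have := ZMod.val_lt (k - p)
  have := ZMod.val_lt (i - j)
  refine ⟨p, q, hpq, ?_, hi⟩
  rcases ZMod.val_sub_eq_or p j i with h₁ | h₁ <;>
    rcases ZMod.val_sub_eq_or p k i with h₂ | h₂ <;> omega

theorem one_le_val_sub_of_arcSpan {i j : ZMod n} (h : arcSpan B i j) : 1 ≤ (j - i).val := by
  obtain ⟨p, q, hpq, hi, hj⟩ := h
  rcases ZMod.val_sub_eq_or p i j with h' | h' <;> omega

theorem isRoundOrdering_arcSpan : IsRoundOrdering (arcSpan B) id := by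
  refine ⟨bijective_id, fun i j => ?_, fun i j => ?_⟩
  · exact ZMod.mem_iff_one_le_val_le_ncard (Equiv.subRight i) (S := {k | arcSpan B i k})
      (fun _ => one_le_val_sub_of_arcSpan) (fun _ hj _ => arcSpan_of_val_sub_le hj) j
  · exact ZMod.mem_iff_one_le_val_le_ncard (Equiv.subLeft i) (S := {k | arcSpan B k i})
      (fun _ => one_le_val_sub_of_arcSpan) (fun _ hj _ => arcSpan_of_val_sub_le' hj) j

end ArcSpan

theorem IsExcellent.exists_isRoundOrdering {V : Type*} {A : V → V → Prop} {n : ℕ} [NeZero n]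
    {f : ZMod n → V} (hf : Bijective f) (hA : IsExcellent A f) :
    ∃ A' : V → V → Prop, ExtendsByNewArcs A A' ∧ IsLocalTournament A' ∧ IsRoundOrdering A' f := by
  set e := Equiv.ofBijective f hf
  have hB : IsExcellent (A on e) id := hA
  have hround : IsRoundOrdering (arcSpan (A on e) on e.symm) f :=
    isRoundOrdering_arcSpan.onFun_symm e
  have horiented : IsOrientedGraph (arcSpan (A on e) on e.symm) := fun _ _ =>
    isOrientedGraph_arcSpan hB _ _
  refine ⟨_, ⟨fun u v h => ?_, fun u v h h' => ?_⟩, hround.isLocalTournament horiented, hround⟩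
  · exact arcSpan_of_rel hB (by simpa [onFun] using h)
  · exact not_rel_of_arcSpan hB h (by simpa [onFun] using h')

theorem stmt_3_general {V : Type*} [Fintype V] (A : V → V → Prop) :
    ((∃ (n : ℕ) (f : ZMod n → V), Function.Bijective f ∧ IsExcellent A f) ↔
      (∃ A' : V → V → Prop, ExtendsByNewArcs A A' ∧ IsLocalTournament A' ∧
        ∃ (n : ℕ) (f : ZMod n → V), IsRoundOrdering A' f)) ∧
    (∀ (n : ℕ) (f : ZMod n → V), Function.Bijective f → IsExcellent A f →
      ∃ A' : V → V → Prop, ExtendsByNewArcs A A' ∧ IsLocalTournament A' ∧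
        IsRoundOrdering A' f) ∧
    (∀ (A' : V → V → Prop) (n : ℕ) (f : ZMod n → V),
      ExtendsByNewArcs A A' → IsLocalTournament A' → IsRoundOrdering A' f →
        IsExcellent A f) := by
  have excellent_to_round (n : ℕ) (f : ZMod n → V) (hf : Bijective f) (hA : IsExcellent A f) :
      ∃ A', ExtendsByNewArcs A A' ∧ IsLocalTournament A' ∧ IsRoundOrdering A' f :=
    have := neZero_of_injective hf.injective
    hA.exists_isRoundOrdering hf
  have round_to_excellent (A' : V → V → Prop) (n : ℕ) (f : ZMod n → V)
      (hext : ExtendsByNewArcs A A') (hlt : IsLocalTournament A') (hround : IsRoundOrdering A' f) :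
      IsExcellent A f :=
    have := neZero_of_injective hround.1.injective
    hround.isExcellent hlt.1 hext.1
  refine ⟨⟨?_, ?_⟩, excellent_to_round, round_to_excellent⟩
  · rintro ⟨n, f, hf, hA⟩
    obtain ⟨A', hext, hlt, hround⟩ := excellent_to_round n f hf hA
    exact ⟨A', hext, hlt, n, f, hround⟩
  · rintro ⟨A', hext, hlt, n, f, hround⟩
    exact ⟨n, f, hround.1, round_to_excellent A' n f hext hlt hround⟩

/-- An oriented graph `A` has an excellent cyclic ordering iff
it can be extended, by adding arcs between non-adjacent vertices, to a local
tournament admitting a round ordering; moreover every excellent ordering of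
`A` is a round ordering of such an extension, and every round ordering of such
an extension is an excellent ordering of `A`. -/
theorem stmt_3 {V : Type*} [Fintype V] (A : V → V → Prop)
    (hA : IsOrientedGraph A) :
    ((∃ (n : ℕ) (f : ZMod n → V), Function.Bijective f ∧ IsExcellent A f) ↔
      (∃ A' : V → V → Prop, ExtendsByNewArcs A A' ∧ IsLocalTournament A' ∧
        ∃ (n : ℕ) (f : ZMod n → V), IsRoundOrdering A' f)) ∧
    (∀ (n : ℕ) (f : ZMod n → V), Function.Bijective f → IsExcellent A f →
      ∃ A' : V → V → Prop, ExtendsByNewArcs A A' ∧ IsLocalTournament A' ∧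
        IsRoundOrdering A' f) ∧
    (∀ (A' : V → V → Prop) (n : ℕ) (f : ZMod n → V),
      ExtendsByNewArcs A A' → IsLocalTournament A' → IsRoundOrdering A' f →
        IsExcellent A f) :=
  stmt_3_general A
end

section
/- An oriented graph D has an excellent cyclic ordering if and only if the partially oriented complete graph D^c, obtained from D by adding an undirected edge between every pair of non-adjacent vertices, can be completed to a locally transitive tournament. -/
/-- The span from `i` to `j` meets `a` and then `b`; `IsExcellent A f` forbids arcs `(f i, f j)`
and `(f s, f t)` with `SpansInOrder i j t s`. -/
def SpansInOrder {n : ℕ} (i j a b : ZMod n) : Prop :=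
  (a - i).val ≤ (b - i).val ∧ (b - i).val ≤ (j - i).val

section CyclicArithmetic

variable {n : ℕ} [NeZero n]

theorem ZMod.val_sub_add_val_sub (x y z : ZMod n) :
    (x - y).val + (y - z).val = (x - z).val ∨
      (x - y).val + (y - z).val = (x - z).val + n := by
  rcases lt_or_ge ((x - y).val + (y - z).val) n with h | h
  · left; rw [← ZMod.val_add_of_lt h, sub_add_sub_cancel]
  · right; rw [ZMod.val_add_val_of_le h, sub_add_sub_cancel]

theorem ZMod.eq_of_val_sub_eq {i a b : ZMod n} (h : (a - i).val = (b - i).val) : a = b :=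
  sub_left_injective (ZMod.val_injective n h)

theorem ZMod.val_sub_add_val_sub_swap {a b : ZMod n} (h : a ≠ b) :
    (a - b).val + (b - a).val = n := by
  have := ZMod.val_sub_add_val_sub a b a
  rw [sub_self, ZMod.val_zero] at this
  have : (a - b).val ≠ 0 := by rwa [ZMod.val_ne_zero, sub_ne_zero]
  omega

theorem spansInOrder_of_opposite_spans {i j i' j' a b : ZMod n} (hab : a ≠ b)
    (h : SpansInOrder i j b a) (h' : SpansInOrder i' j' a b) : SpansInOrder i j j' i' := by
  unfold SpansInOrder at *
  have : (a - i).val ≠ (b - i).val := fun e => hab (ZMod.eq_of_val_sub_eq e)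
  have : (a - i').val ≠ (b - i').val := fun e => hab (ZMod.eq_of_val_sub_eq e)
  have := ZMod.val_sub_add_val_sub a i' i
  have := ZMod.val_sub_add_val_sub b i' i
  have := ZMod.val_sub_add_val_sub j' i' i
  have := ZMod.val_lt (j' - i')
  have := ZMod.val_lt (j' - i)
  omega

theorem spansInOrder_of_backward_in_opposite_spans {a b s t s' t' : ZMod n} (hab : a ≠ b)
    (hst : s ≠ t) (hst' : s' ≠ t') (h : SpansInOrder a b t s) (h' : SpansInOrder b a t' s') :
    SpansInOrder s t t' s' := by
  unfold SpansInOrder at *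
  have : (t - a).val ≠ (s - a).val := fun e => hst (ZMod.eq_of_val_sub_eq e).symm
  have : (t' - b).val ≠ (s' - b).val := fun e => hst' (ZMod.eq_of_val_sub_eq e).symm
  have := ZMod.val_sub_add_val_sub t a s
  have := ZMod.val_sub_add_val_sub b a s
  have := ZMod.val_sub_add_val_sub s' b s
  have := ZMod.val_sub_add_val_sub t' b s
  have has := ZMod.val_sub_add_val_sub a s a
  rw [sub_self, ZMod.val_zero] at has
  have := ZMod.val_sub_add_val_sub_swap hab
  have := ZMod.val_lt (b - s)
  omega

theorem spansInOrder_of_span_and_backward {i j a b s t : ZMod n} (hab : a ≠ b) (hst : s ≠ t)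
    (h : SpansInOrder i j b a) (h' : SpansInOrder b a t s) : SpansInOrder i j t s := by
  unfold SpansInOrder at *
  have : (a - i).val ≠ (b - i).val := fun e => hab (ZMod.eq_of_val_sub_eq e)
  have : (t - b).val ≠ (s - b).val := fun e => hst (ZMod.eq_of_val_sub_eq e).symm
  have := ZMod.val_sub_add_val_sub s b i
  have := ZMod.val_sub_add_val_sub t b i
  have := ZMod.val_sub_add_val_sub a b i
  have := ZMod.val_lt (j - i)
  have := ZMod.val_lt (a - b)
  omega

end CyclicArithmetic

section Excellent

variable {V : Type*} {A B : V → V → Prop} {n : ℕ} {f : ZMod n → V}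

theorem IsExcellent.mono (hexc : IsExcellent A f) (hBA : B ≤ A) : IsExcellent B f :=
  fun ⟨i, j, s, t, hij, hst, hspan⟩ => hexc ⟨i, j, s, t, hBA _ _ hij, hBA _ _ hst, hspan⟩

theorem IsExcellent.isOrientedGraph (hexc : IsExcellent A f) (hf : Function.Surjective f) :
    IsOrientedGraph A := by
  intro u v huv hvu
  obtain ⟨i, rfl⟩ := hf u
  obtain ⟨j, rfl⟩ := hf v
  exact hexc ⟨i, j, j, i, huv, hvu, by simp, le_rfl⟩

/-- No arc of `A` points backwards inside the span from `a` to `b`, and no span of an arc of `A`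
meets `b` before `a`: the two ways in which a new arc `(f a, f b)` could be excluded. -/
def CanAddArc (A : V → V → Prop) (f : ZMod n → V) (a b : ZMod n) : Prop :=
  (¬ ∃ s t, A (f s) (f t) ∧ SpansInOrder a b t s) ∧ ¬ ∃ i j, A (f i) (f j) ∧ SpansInOrder i j b a

theorem IsExcellent.addArc (hexc : IsExcellent A f) (hf : Function.Injective f) {a b : ZMod n}
    (hab : a ≠ b) (hadd : CanAddArc A f a b) :
    IsExcellent (fun x y => A x y ∨ x = f a ∧ y = f b) f := by
  rintro ⟨i, j, s, t, hij | ⟨hi, hj⟩, hst | ⟨hs, ht⟩, hspan⟩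
  · exact hexc ⟨i, j, s, t, hij, hst, hspan⟩
  · obtain ⟨rfl, rfl⟩ : s = a ∧ t = b := ⟨hf hs, hf ht⟩
    exact hadd.2 ⟨i, j, hij, hspan⟩
  · obtain ⟨rfl, rfl⟩ : i = a ∧ j = b := ⟨hf hi, hf hj⟩
    exact hadd.1 ⟨s, t, hst, hspan⟩
  · have h0 : (t - i).val ≤ (s - i).val := hspan.1
    rw [hf hi, hf hs, hf ht, sub_self, ZMod.val_zero, Nat.le_zero, ZMod.val_eq_zero,
      sub_eq_zero] at h0
    exact hab h0.symm

theorem IsExcellent.val_sub_lt_of_path_from (hexc : IsExcellent A f) {i p q : ZMod n}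
    (hip : A (f i) (f p)) (hpq : A (f p) (f q)) : (p - i).val < (q - i).val := by
  by_contra h
  exact hexc ⟨i, p, p, q, hip, hpq, not_lt.mp h, le_rfl⟩

variable [NeZero n]

theorem IsExcellent.canAddArc_or (hexc : IsExcellent A f) (hf : Function.Surjective f)
    {a b : ZMod n} (hab : a ≠ b) : CanAddArc A f a b ∨ CanAddArc A f b a := by
  have hirr : ∀ {s t}, A (f s) (f t) → s ≠ t := fun hst e => by
    subst e; exact hexc.isOrientedGraph hf _ _ hst hst
  by_contra hblocked
  simp only [CanAddArc, not_or, not_and_or, not_not] at hblocked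
  obtain ⟨⟨s, t, hst, h⟩ | ⟨i, j, hij, h⟩, ⟨s', t', hst', h'⟩ | ⟨i', j', hij', h'⟩⟩ := hblocked
  · exact hexc ⟨s, t, s', t', hst, hst',
      spansInOrder_of_backward_in_opposite_spans hab (hirr hst) (hirr hst') h h'⟩
  · exact hexc ⟨i', j', s, t, hij', hst,
      spansInOrder_of_span_and_backward hab.symm (hirr hst) h' h⟩
  · exact hexc ⟨i, j, s', t', hij, hst', spansInOrder_of_span_and_backward hab (hirr hst') h h'⟩
  · exact hexc ⟨i, j, i', j', hij, hij', spansInOrder_of_opposite_spans hab h h'⟩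

theorem IsExcellent.exists_extension (hexc : IsExcellent A f) (hf : Function.Bijective f)
    {u v : V} (huv : u ≠ v) : ∃ B, A ≤ B ∧ (B u v ∨ B v u) ∧ IsExcellent B f := by
  obtain ⟨a, rfl⟩ := hf.2 u
  obtain ⟨b, rfl⟩ := hf.2 v
  have hab : a ≠ b := ne_of_apply_ne f huv
  rcases hexc.canAddArc_or hf.2 hab with hadd | hadd
  · exact ⟨_, fun x y h => Or.inl h, Or.inl (Or.inr ⟨rfl, rfl⟩), hexc.addArc hf.1 hab hadd⟩
  · exact ⟨_, fun x y h => Or.inl h, Or.inr (Or.inr ⟨rfl, rfl⟩), hexc.addArc hf.1 hab.symm hadd⟩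

theorem IsExcellent.exists_tournament [Finite V] (hexc : IsExcellent A f)
    (hf : Function.Bijective f) : ∃ T, A ≤ T ∧ IsTournament T ∧ IsExcellent T f := by
  obtain ⟨T, ⟨hAT, hexcT⟩, hmax⟩ :=
    (Set.toFinite {B | A ≤ B ∧ IsExcellent B f}).exists_maximal ⟨A, le_rfl, hexc⟩
  refine ⟨T, hAT, ⟨hexcT.isOrientedGraph hf.2, fun u v huv => ?_⟩, hexcT⟩
  obtain ⟨B, hTB, huvB, hexcB⟩ := hexcT.exists_extension hf huv
  have hBT : B ≤ T := hmax ⟨hAT.trans hTB, hexcB⟩ hTB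
  exact huvB.imp (hBT u v) (hBT v u)

theorem IsExcellent.val_sub_lt_of_path_to (hexc : IsExcellent A f) {i p q : ZMod n}
    (hpq : A (f p) (f q)) (hqi : A (f q) (f i)) : (i - q).val < (i - p).val := by
  by_contra h
  refine hexc ⟨q, i, p, q, hqi, hpq, by simp, ?_⟩
  have := ZMod.val_sub_add_val_sub i p q
  have := ZMod.val_lt (p - q)
  omega

theorem IsTournament.isLocallyTransitive_of_isExcellent (hT : IsTournament A)
    (hf : Function.Surjective f) (hexc : IsExcellent A f) : IsLocallyTransitive A := by
  have reverse : ∀ {x y z}, A x y → A y z → ¬ A x z → A z x := fun hxy hyz hxz =>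
    (hT.2 _ _ fun e => by subst e; exact hT.1 _ _ hxy hyz).resolve_left hxz
  constructor
  · intro v x y z hvx hvy hvz hxy hyz
    obtain ⟨i, rfl⟩ := hf v
    obtain ⟨a, rfl⟩ := hf x
    obtain ⟨b, rfl⟩ := hf y
    obtain ⟨c, rfl⟩ := hf z
    by_contra hxz
    have := hexc.val_sub_lt_of_path_from hvx hxy
    have := hexc.val_sub_lt_of_path_from hvy hyz
    have := hexc.val_sub_lt_of_path_from hvz (reverse hxy hyz hxz)
    omega
  · intro v x y z hxv hyv hzv hxy hyz
    obtain ⟨i, rfl⟩ := hf v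
    obtain ⟨a, rfl⟩ := hf x
    obtain ⟨b, rfl⟩ := hf y
    obtain ⟨c, rfl⟩ := hf z
    by_contra hxz
    have := hexc.val_sub_lt_of_path_to hxy hyv
    have := hexc.val_sub_lt_of_path_to hyz hzv
    have := hexc.val_sub_lt_of_path_to (reverse hxy hyz hxz) hxv
    omega

end Excellent

section RoundOrdering

variable {V : Type*} {A : V → V → Prop}

theorem isExcellent_of_forward_out_intervals {n : ℕ} [NeZero n] {f : ZMod n → V}
    (hA : IsOrientedGraph A)
    (hfwd : ∀ i j k, A (f i) (f j) → k ≠ i → (k - i).val ≤ (j - i).val → A (f i) (f k)) :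
    IsExcellent A f := by
  rintro ⟨i, j, s, t, hij, hst, hts, hsj⟩
  have hirr : ∀ {p q}, A (f p) (f q) → p ≠ q := fun hpq e => by
    subst e; exact hA _ _ hpq hpq
  have hts' : (t - i).val ≠ (s - i).val := fun e => hirr hst (ZMod.eq_of_val_sub_eq e).symm
  have hsi : s ≠ i := by
    rintro rfl
    rw [sub_self, ZMod.val_zero] at hts hts'
    omega
  refine hA _ _ (hfwd i j s hij hsi hsj) (hfwd s t i hst hsi.symm ?_)
  have := ZMod.val_sub_add_val_sub t i s
  have := ZMod.val_sub_add_val_sub_swap hsi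
  have := ZMod.val_lt (t - s)
  omega

-- `hcyc`: in the cyclic order given by `r`, the out-neighbourhood of `x` contains every `z`
-- in the interval `(x, y]` up to an out-neighbour `y`.
theorem exists_isExcellent_of_cyclic_out_intervals [Fintype V] [Nonempty V]
    (r : V → V → Prop) [IsStrictTotalOrder V r] (hA : IsOrientedGraph A)
    (hcyc : ∀ x y z, A x y → r x z ∧ ¬ r y z ∨ r y x ∧ (r x z ∨ ¬ r y z) → A x z) :
    ∃ (n : ℕ) (f : ZMod n → V), Function.Bijective f ∧ IsExcellent A f := by
  classical
  let := linearOrderOfSTO r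
  obtain ⟨m, hm⟩ := Nat.exists_eq_succ_of_ne_zero (Fintype.card_ne_zero (α := V))
  let e := Fintype.orderIsoFinOfCardEq V hm
  have hlt : ∀ a b : ZMod (m + 1), r (e a) (e b) ↔ a.val < b.val := fun a b => e.lt_iff_lt
  refine ⟨m + 1, e, e.bijective, isExcellent_of_forward_out_intervals hA
    fun i j k hij hki hkj => hcyc _ _ _ hij ?_⟩
  rw [hlt, hlt, hlt]
  have hk := ZMod.val_sub_add_val_sub k i 0
  have hj := ZMod.val_sub_add_val_sub j i 0
  simp only [sub_zero] at hk hj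
  have : k.val ≠ i.val := fun h => hki (ZMod.val_injective _ h)
  have := ZMod.val_lt j; have := ZMod.val_lt k
  have := ZMod.val_lt (k - i); have := ZMod.val_lt (j - i)
  omega

end RoundOrdering

section LocallyTransitive

variable {V : Type*} {T : V → V → Prop} {v₀ x y z : V}

open Classical in
noncomputable def sideOf (T : V → V → Prop) (v₀ x : V) : ℕ :=
  if x = v₀ then 0 else if T v₀ x then 1 else 2

/-- The linear order `v₀ < N⁺(v₀) < N⁻(v₀)`, each neighbourhood being ordered by `T` itself. -/
def Precedes (T : V → V → Prop) (v₀ x y : V) : Prop :=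
  sideOf T v₀ x < sideOf T v₀ y ∨ sideOf T v₀ x = sideOf T v₀ y ∧ T x y

theorem sideOf_le_two : sideOf T v₀ x ≤ 2 := by
  unfold sideOf; split_ifs <;> omega

theorem sideOf_eq_zero_iff : sideOf T v₀ x = 0 ↔ x = v₀ := by
  unfold sideOf; split_ifs <;> simp_all

theorem IsTournament.sideOf_eq_one_iff (hT : IsTournament T) : sideOf T v₀ x = 1 ↔ T v₀ x := by
  unfold sideOf
  split_ifs with hx h
  · subst hx; simpa using fun h => hT.1 _ _ h h
  · simpa
  · simpa

theorem IsTournament.sideOf_eq_two_iff (hT : IsTournament T) : sideOf T v₀ x = 2 ↔ T x v₀ := by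
  unfold sideOf
  split_ifs with hx h
  · subst hx; simpa using fun h => hT.1 _ _ h h
  · simpa using hT.1 _ _ h
  · simpa using (hT.2 x v₀ hx).resolve_right h

theorem IsLocallyTransitive.isStrictTotalOrder_precedes (hLT : IsLocallyTransitive T)
    (hT : IsTournament T) (v₀ : V) : IsStrictTotalOrder V (Precedes T v₀) where
  irrefl x hxx := hxx.elim (lt_irrefl _) fun h => hT.1 _ _ h.2 h.2
  trans x y z hxy hyz := by
    rcases hxy with hxy | ⟨hsxy, hxy⟩ <;> rcases hyz with hyz | ⟨hsyz, hyz⟩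
    · exact Or.inl (hxy.trans hyz)
    · exact Or.inl (hsyz ▸ hxy)
    · exact Or.inl (hsxy ▸ hyz)
    refine Or.inr ⟨hsxy.trans hsyz, ?_⟩
    have hsz := hsxy.trans hsyz
    have := sideOf_le_two (T := T) (v₀ := v₀) (x := x)
    obtain hs | hs | hs : sideOf T v₀ x = 0 ∨ sideOf T v₀ x = 1 ∨ sideOf T v₀ x = 2 := by omega
    · have hx : x = v₀ := sideOf_eq_zero_iff.1 hs
      have hy : y = v₀ := sideOf_eq_zero_iff.1 (hsxy ▸ hs)
      subst hx hy
      exact (hT.1 _ _ hxy hxy).elim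
    · exact hLT.1 v₀ x y z (hT.sideOf_eq_one_iff.1 hs) (hT.sideOf_eq_one_iff.1 (hsxy ▸ hs))
        (hT.sideOf_eq_one_iff.1 (hsz ▸ hs)) hxy hyz
    · exact hLT.2 v₀ x y z (hT.sideOf_eq_two_iff.1 hs) (hT.sideOf_eq_two_iff.1 (hsxy ▸ hs))
        (hT.sideOf_eq_two_iff.1 (hsz ▸ hs)) hxy hyz
  trichotomous x y hxy hyx := by
    simp only [Precedes, not_or, not_and] at hxy hyx
    have hs : sideOf T v₀ x = sideOf T v₀ y := by omega
    by_contra hne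
    exact (hT.2 x y hne).elim (hxy.2 hs) (hyx.2 hs.symm)

theorem IsTournament.of_not_precedes (hT : IsTournament T) (h : ¬ Precedes T v₀ y z) :
    sideOf T v₀ z ≤ sideOf T v₀ y ∧ (sideOf T v₀ z = sideOf T v₀ y → z = y ∨ T z y) := by
  simp only [Precedes, not_or, not_and] at h
  refine ⟨not_lt.1 h.1, fun hs => ?_⟩
  by_contra! hne
  exact hne.2 ((hT.2 y z fun e => hne.1 e.symm).resolve_left (h.2 hs.symm))

theorem IsLocallyTransitive.adj_of_out_in (hLT : IsLocallyTransitive T) (hT : IsTournament T)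
    (hx : T v₀ x) (hy : T y v₀) (hz : T z v₀) (hxy : T x y) (hzy : T z y) : T x z := by
  by_contra hxz
  have hzx := (hT.2 x z fun e => hT.1 _ _ hx (e ▸ hz)).resolve_left hxz
  exact hT.1 _ _ hy (hLT.1 z v₀ x y hz hzx hzy hx hxy)

theorem IsLocallyTransitive.adj_of_in_out (hLT : IsLocallyTransitive T) (hT : IsTournament T)
    (hx : T x v₀) (hy : T v₀ y) (hz : T v₀ z) (hxy : T x y) (hzy : T z y) : T x z := by
  by_contra hxz
  have hzx := (hT.2 x z fun e => hT.1 _ _ hx (e ▸ hz)).resolve_left hxz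
  exact hT.1 _ _ hz (hLT.2 y z x v₀ hzy hxy hy hzx hx)

-- `hz` says that `z` lies in the cyclic interval `(x, y]` of the order `Precedes T v₀`.
theorem IsLocallyTransitive.cyclic_out_interval (hLT : IsLocallyTransitive T)
    (hT : IsTournament T) (hxy : T x y)
    (hz : Precedes T v₀ x z ∧ ¬ Precedes T v₀ y z ∨
      Precedes T v₀ y x ∧ (Precedes T v₀ x z ∨ ¬ Precedes T v₀ y z)) : T x z := by
  have wrap : Precedes T v₀ y x → sideOf T v₀ y < sideOf T v₀ x :=
    fun h => h.resolve_right fun h' => hT.1 _ _ hxy h'.2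
  have hx2 : sideOf T v₀ x ≤ 2 := sideOf_le_two
  have hy2 : sideOf T v₀ y ≤ 2 := sideOf_le_two
  have hz2 : sideOf T v₀ z ≤ 2 := sideOf_le_two
  rcases hz with ⟨hxz, hyz⟩ | ⟨hyx, hxz | hyz⟩
  · obtain ⟨hzy, heq⟩ := hT.of_not_precedes hyz
    refine hxz.elim (fun hxz => ?_) And.right
    obtain hsx | hsx : sideOf T v₀ x = 0 ∨ sideOf T v₀ x = 1 := by omega
    · rw [sideOf_eq_zero_iff.1 hsx] at hxy ⊢
      have := hT.sideOf_eq_one_iff.2 hxy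
      exact hT.sideOf_eq_one_iff.1 (by omega)
    · rcases heq (by omega) with rfl | hzy
      · exact hxy
      · exact hLT.adj_of_out_in hT (hT.sideOf_eq_one_iff.1 hsx)
          (hT.sideOf_eq_two_iff.1 (by omega)) (hT.sideOf_eq_two_iff.1 (by omega)) hxy hzy
  · have hsyx := wrap hyx
    refine hxz.elim (fun hxz => ?_) And.right
    have hy : y = v₀ := (sideOf_eq_zero_iff (T := T)).1 (by omega)
    exact (hT.1 _ _ (hT.sideOf_eq_one_iff.1 (by omega)) (hy ▸ hxy)).elim
  · have hsyx := wrap hyx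
    obtain ⟨hzy, heq⟩ := hT.of_not_precedes hyz
    by_cases hsy : sideOf T v₀ y = 0
    · rwa [sideOf_eq_zero_iff.1 (by omega : sideOf T v₀ z = 0), ← sideOf_eq_zero_iff.1 hsy]
    have hx : T x v₀ := hT.sideOf_eq_two_iff.1 (by omega)
    by_cases hsz : sideOf T v₀ z = 0
    · rwa [sideOf_eq_zero_iff.1 hsz]
    rcases heq (by omega) with rfl | hzy
    · exact hxy
    · exact hLT.adj_of_in_out hT hx (hT.sideOf_eq_one_iff.1 (by omega))
        (hT.sideOf_eq_one_iff.1 (by omega)) hxy hzy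

end LocallyTransitive

theorem stmt_5_general {V : Type*} [Fintype V] [Nonempty V] (A : V → V → Prop) :
    (∃ (n : ℕ) (f : ZMod n → V), Function.Bijective f ∧ IsExcellent A f) ↔
    (∃ T : V → V → Prop, CompletesToTournament A T ∧ IsLocallyTransitive T) := by
  constructor
  · rintro ⟨n, f, hf, hexc⟩
    have : NeZero n := ⟨by rintro rfl; exact @not_finite ℤ _ (Finite.of_injective f hf.1)⟩
    obtain ⟨T, hAT, hT, hexcT⟩ := hexc.exists_tournament hf
    exact ⟨T, ⟨hAT, fun u v huv hvu => hT.1 _ _ huv (hAT _ _ hvu), hT⟩,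
      hT.isLocallyTransitive_of_isExcellent hf.2 hexcT⟩
  · rintro ⟨T, ⟨hAT, -, hT⟩, hLT⟩
    let v₀ := Classical.arbitrary V
    have := hLT.isStrictTotalOrder_precedes hT v₀
    obtain ⟨n, f, hf, hexc⟩ := exists_isExcellent_of_cyclic_out_intervals (Precedes T v₀) hT.1
      fun _ _ _ hxy hz => hLT.cyclic_out_interval hT hxy hz
    exact ⟨n, f, hf, hexc.mono hAT⟩

/-- An oriented graph `A` has an excellent cyclic ordering iff
the partially oriented complete graph `A^c` (add an edge between each pair of
non-adjacent vertices) can be completed to a locally transitive tournament. -/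
theorem stmt_5 {V : Type*} [Fintype V] [Nonempty V] (A : V → V → Prop)
    (hA : IsOrientedGraph A) :
    (∃ (n : ℕ) (f : ZMod n → V), Function.Bijective f ∧ IsExcellent A f) ↔
    (∃ T : V → V → Prop, CompletesToTournament A T ∧ IsLocallyTransitive T) :=
  stmt_5_general A
end

section
/- If a vertex c of an oriented graph D has a directed cycle contained in its out-neighbourhood, then D is not a spanning subdigraph of any locally transitive tournament, and consequently D has no excellent cyclic ordering. -/
theorem HasCycleIn.mono {V : Type*} {A B : V → V → Prop} {S S' : Set V}
    (h : HasCycleIn A S) (hAB : ∀ u v, A u v → B u v) (hS : S ⊆ S') : HasCycleIn B S' := by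
  obtain ⟨n, f, hn, hinj, hmem, harc⟩ := h
  exact ⟨n, f, hn, hinj, fun i => hS (hmem i), fun i => hAB _ _ (harc i)⟩

/-- Going once around the cycle by transitivity yields a loop. -/
theorem HasCycleIn.exists_self_of_transitiveOn {V : Type*} {T : V → V → Prop} {S : Set V}
    (h : HasCycleIn T S)
    (htrans : ∀ x ∈ S, ∀ y ∈ S, ∀ z ∈ S, T x y → T y z → T x z) : ∃ x, T x x := by
  obtain ⟨n, f, hn, -, hmem, harc⟩ := h
  have hpath : ∀ k : ℕ, 1 ≤ k → ∀ i, T (f i) (f (i + k)) := by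
    intro k hk
    induction k, hk using Nat.le_induction with
    | base => simpa using harc
    | succ k _ ih =>
      intro i
      rw [Nat.cast_succ, ← add_assoc]
      exact htrans _ (hmem _) _ (hmem _) _ (hmem _) (ih i) (harc (i + k))
  refine ⟨f 0, ?_⟩
  simpa using hpath n (by omega) 0

theorem IsLocallyTransitive.not_hasCycleIn_outNeighbourhood {V : Type*} {T : V → V → Prop}
    (hT : IsOrientedGraph T) (hL : IsLocallyTransitive T) (c : V) :
    ¬ HasCycleIn T {u | T c u} := fun h => by
  obtain ⟨x, hx⟩ := h.exists_self_of_transitiveOn fun x hx y hy z hz => hL.1 c x y z hx hy hz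
  exact hT x x hx hx

/-- The cycle vertex `x` farthest from `c` along the ordering is followed on the cycle by a
vertex `y` no farther from `c`, so the arcs `(c, x)` and `(x, y)` cross. -/
theorem not_isExcellent_of_hasCycleIn_outNeighbourhood {V : Type*} {A : V → V → Prop} {c : V}
    (hcyc : HasCycleIn A {u | A c u}) {m : ℕ} {g : ZMod m → V} (hg : Function.Surjective g) :
    ¬ IsExcellent A g := by
  obtain ⟨n, f, hn, -, hmem, harc⟩ := hcyc
  have : NeZero n := ⟨by omega⟩
  let pos := Function.surjInv hg
  have hpos : ∀ v, g (pos v) = v := Function.surjInv_eq hg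
  obtain ⟨k, -, hk⟩ := Finset.exists_max_image Finset.univ
    (fun k => (pos (f k) - pos c).val) ⟨0, Finset.mem_univ 0⟩
  refine not_not.mpr ⟨pos c, pos (f k), pos (f k), pos (f (k + 1)), ?_, ?_,
    hk (k + 1) (Finset.mem_univ _), le_rfl⟩
  · rw [hpos, hpos]; exact hmem k
  · rw [hpos, hpos]; exact harc k

theorem stmt_8_general {V : Type*} (A : V → V → Prop)
    (c : V)
    (hcyc : HasCycleIn A {u | A c u}) :
    (¬ ∃ T : V → V → Prop, (∀ u v : V, A u v → T u v) ∧
        IsTournament T ∧ IsLocallyTransitive T) ∧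
    (¬ ∃ (n : ℕ) (f : ZMod n → V), Function.Bijective f ∧ IsExcellent A f) :=
  ⟨fun ⟨_, hsub, hT, hL⟩ =>
      hL.not_hasCycleIn_outNeighbourhood hT.1 c (hcyc.mono hsub fun _ => hsub c _),
    fun ⟨_, _, hf, hex⟩ => not_isExcellent_of_hasCycleIn_outNeighbourhood hcyc hf.2 hex⟩

/-- If a vertex `c` of an oriented graph has a directed cycle
contained in its out-neighbourhood, then the oriented graph is not a spanning
subdigraph of any locally transitive tournament, and it has no excellent
cyclic ordering. -/
theorem stmt_8 {V : Type*} [Fintype V] (A : V → V → Prop)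
    (hA : IsOrientedGraph A) (c : V)
    (hcyc : HasCycleIn A {u | A c u}) :
    (¬ ∃ T : V → V → Prop, (∀ u v : V, A u v → T u v) ∧
        IsTournament T ∧ IsLocallyTransitive T) ∧
    (¬ ∃ (n : ℕ) (f : ZMod n → V), Function.Bijective f ∧ IsExcellent A f) :=
  stmt_8_general A c hcyc
end

section
/- Let P be a partially oriented complete graph whose arc set induces two vertex-disjoint locally transitive tournaments T' and T'' with V(T') ∪ V(T'') equal to the whole vertex set, and with no arcs between T' and T''. Then P can be completed to a locally transitive tournament. -/
/-!
Every finite locally transitive tournament is a subtournament of the circular tournament on `ℚ/ℤ`,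
in which `a → b` iff `b` lies less than half a turn ahead of `a`. Vertices are inserted one at a
time: the out- and in-neighbourhoods of a new vertex `w` are transitive, and their sources locate an
arc of the circle on which `w` can be placed. Embed `T'` and `T''` separately and rotate the second
by a generic amount, so that no two points are equal or antipodal; the circular tournament then
orients every pair, and it is locally transitive because the circle's tournament is.
-/

open Int Topology

def circArc (a b : ℚ) : Prop := 0 < fract (b - a) ∧ fract (b - a) < 1/2

lemma fract_sub_swap {a b : ℚ} (h : 0 < fract (b - a)) : fract (a - b) = 1 - fract (b - a) := by
  rw [← neg_sub, fract_neg h.ne']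

lemma circArc_asymm {a b : ℚ} (h : circArc a b) : ¬ circArc b a := by
  rintro ⟨-, h'⟩
  rw [fract_sub_swap h.1] at h'
  linarith [h.2]

lemma circArc_add_right {a b : ℚ} (t : ℚ) : circArc (a + t) (b + t) ↔ circArc a b := by
  rw [circArc, circArc, add_sub_add_right_eq_sub]

lemma circArc_or_circArc {a b : ℚ} (h0 : fract (b - a) ≠ 0) (h1 : fract (b - a) ≠ 1/2) :
    circArc a b ∨ circArc b a := by
  have hpos : 0 < fract (b - a) := (fract_nonneg _).lt_of_ne' h0
  rcases h1.lt_or_gt with h | h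
  · exact Or.inl ⟨hpos, h⟩
  · right
    rw [circArc, fract_sub_swap hpos]
    constructor <;> linarith [fract_lt_one (b - a)]

lemma half_lt_fract_sub_of_circArc {a b : ℚ} (h : circArc a b) : 1/2 < fract (a - b) := by
  rw [fract_sub_swap h.1]
  linarith [h.2]

lemma fract_sub_lt_half_of_eq_or_circArc {a b : ℚ} (h : b = a ∨ circArc a b) :
    fract (b - a) < 1/2 := by
  rcases h with rfl | h
  · simp
  · exact h.2

lemma fract_sub_half_lt_half_iff (t : ℚ) : fract (t - 1/2) < 1/2 ↔ 1/2 ≤ fract t := by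
  rcases lt_or_ge (fract t) (1/2) with h | h
  · have : fract (t - 1/2) = fract t + 1/2 :=
      fract_eq_iff.2 ⟨by linarith [fract_nonneg t], by linarith, ⌊t⌋ - 1,
        by rw [← self_sub_floor]; push_cast; ring⟩
    rw [this]
    constructor <;> intro <;> linarith [fract_nonneg t]
  · have : fract (t - 1/2) = fract t - 1/2 :=
      fract_eq_iff.2 ⟨by linarith, by linarith [fract_lt_one t], ⌊t⌋,
        by rw [← self_sub_floor]; ring⟩
    rw [this]
    constructor <;> intro <;> linarith [fract_lt_one t]

lemma circArc_iff_fract_sub_lt {v a b : ℚ} (ha : circArc v a) (hb : circArc v b) :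
    circArc a b ↔ fract (a - v) < fract (b - v) := by
  obtain ⟨ha0, ha1⟩ := ha
  obtain ⟨hb0, hb1⟩ := hb
  have hba : fract (b - a) = fract (fract (b - v) - fract (a - v)) :=
    fract_eq_fract.2 ⟨⌊b - v⌋ - ⌊a - v⌋, by simp only [← self_sub_floor]; push_cast; ring⟩
  rw [circArc, hba]
  rcases lt_trichotomy (fract (a - v)) (fract (b - v)) with h | h | h
  · rw [fract_eq_self.2 ⟨by linarith, by linarith⟩]
    exact iff_of_true ⟨by linarith, by linarith⟩ h
  · simp [h]
  · have : fract (fract (b - v) - fract (a - v)) = fract (b - v) - fract (a - v) + 1 :=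
      fract_eq_iff.2 ⟨by linarith, by linarith, -1, by push_cast; ring⟩
    rw [this]
    exact iff_of_false (fun h' => by linarith [h'.2]) h.not_gt

lemma circArc_sub_half_of_circArc {a v : ℚ} (h : circArc a v) : circArc (v - 1/2) a := by
  have h' := half_lt_fract_sub_of_circArc h
  have : fract (a - (v - 1/2)) = fract (a - v) - 1/2 :=
    fract_eq_iff.2 ⟨by linarith, by linarith [fract_lt_one (a - v)], ⌊a - v⌋ + 1,
      by rw [← self_sub_floor]; push_cast; ring⟩
  rw [circArc, this]
  constructor <;> linarith [fract_lt_one (a - v), h.2, fract_sub_swap h.1]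

lemma isLocallyTransitive_circArc : IsLocallyTransitive circArc := by
  have out : ∀ v x y z : ℚ, circArc v x → circArc v y → circArc v z →
      circArc x y → circArc y z → circArc x z := fun v x y z hx hy hz hxy hyz =>
    (circArc_iff_fract_sub_lt hx hz).2
      (((circArc_iff_fract_sub_lt hx hy).1 hxy).trans ((circArc_iff_fract_sub_lt hy hz).1 hyz))
  exact ⟨out, fun v x y z hx hy hz => out (v - 1/2) x y z (circArc_sub_half_of_circArc hx)
    (circArc_sub_half_of_circArc hy) (circArc_sub_half_of_circArc hz)⟩

lemma IsLocallyTransitive.comap {V W : Type*} {R : W → W → Prop} (hR : IsLocallyTransitive R)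
    (f : V → W) : IsLocallyTransitive (fun u v => R (f u) (f v)) :=
  ⟨fun v x y z => hR.1 (f v) (f x) (f y) (f z), fun v x y z => hR.2 (f v) (f x) (f y) (f z)⟩

lemma exists_circArc_between {X Y : Set ℚ} (hX : X.Finite) (hY : Y.Finite) (c : ℚ)
    (hXc : ∀ a ∈ X, fract (a - c) < 1/2) (hYc : ∀ b ∈ Y, 1/2 ≤ fract (b - c)) :
    ∃ x, (∀ a ∈ X, circArc x a) ∧ ∀ b ∈ Y, circArc b x := by
  have small : ∀ g : ℚ, 0 < g → ∀ᶠ ε in 𝓝[>] (0 : ℚ), 0 < ε ∧ ε < g := fun _ hg =>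
    Ioo_mem_nhdsGT hg
  have hX' : ∀ᶠ ε in 𝓝[>] (0 : ℚ), ∀ a ∈ X, circArc (c - ε) a := by
    refine (Filter.eventually_all_finite hX).2 fun a ha => ?_
    filter_upwards [small (1/2 - fract (a - c)) (by linarith [hXc a ha])] with ε ⟨hε0, hε⟩
    have : fract (a - (c - ε)) = fract (a - c) + ε :=
      fract_eq_iff.2 ⟨by linarith [fract_nonneg (a - c)], by linarith, ⌊a - c⌋,
        by rw [← self_sub_floor]; ring⟩
    rw [circArc, this]
    constructor <;> linarith [fract_nonneg (a - c)]
  have hY' : ∀ᶠ ε in 𝓝[>] (0 : ℚ), ∀ b ∈ Y, circArc b (c - ε) := by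
    refine (Filter.eventually_all_finite hY).2 fun b hb => ?_
    filter_upwards [small (1 - fract (b - c)) (by linarith [fract_lt_one (b - c)])]
      with ε ⟨hε0, hε⟩
    have : fract (c - ε - b) = 1 - fract (b - c) - ε :=
      fract_eq_iff.2 ⟨by linarith, by linarith [hYc b hb], -⌊b - c⌋ - 1,
        by rw [← self_sub_floor]; push_cast; ring⟩
    rw [circArc, this]
    constructor <;> linarith [hYc b hb]
  obtain ⟨ε, hεX, hεY⟩ := (hX'.and hY').exists
  exact ⟨c - ε, hεX, hεY⟩

lemma exists_add_circArc_total {X Y : Set ℚ} (hX : X.Finite) (hY : Y.Finite) :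
    ∃ ε, ∀ a ∈ X, ∀ b ∈ Y, circArc a (b + ε) ∨ circArc (b + ε) a := by
  let bad := (fun ab : ℚ × ℚ => fract (ab.1 - ab.2)) '' X ×ˢ Y ∪
    (fun ab : ℚ × ℚ => fract (ab.1 - ab.2 + 1/2)) '' X ×ˢ Y
  have hbad : bad.Finite := ((hX.prod hY).image _).union ((hX.prod hY).image _)
  obtain ⟨ε, ⟨hε0, hε1⟩, hεbad⟩ :=
    (Set.Ioo_infinite (show (0 : ℚ) < 1 by norm_num)).exists_notMem_finite hbad
  refine ⟨ε, fun a ha b hb => circArc_or_circArc (fun h => hεbad ?_) (fun h => hεbad ?_)⟩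
  · obtain ⟨-, -, z, hz⟩ := fract_eq_iff.1 h
    refine Or.inl ⟨(a, b), ⟨ha, hb⟩, fract_eq_iff.2 ⟨hε0.le, hε1, -z, ?_⟩⟩
    push_cast
    linarith
  · obtain ⟨-, -, z, hz⟩ := fract_eq_iff.1 h
    refine Or.inr ⟨(a, b), ⟨ha, hb⟩, fract_eq_iff.2 ⟨hε0.le, hε1, -z, ?_⟩⟩
    push_cast
    linarith

section

variable {V : Type*} {A : V → V → Prop}

lemma exists_source (hA : IsOrientedGraph A) {S : Set V} (hS : S.Finite) (hne : S.Nonempty)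
    (htot : ∀ u ∈ S, ∀ v ∈ S, u ≠ v → A u v ∨ A v u)
    (htrans : ∀ x ∈ S, ∀ y ∈ S, ∀ z ∈ S, A x y → A y z → A x z) :
    ∃ s ∈ S, ∀ v ∈ S, v = s ∨ A s v := by
  obtain ⟨s, hsS, hmax⟩ := hS.exists_maximalFor (fun v => {x ∈ S | A v x}) S hne
  refine ⟨s, hsS, fun v hv => or_iff_not_imp_left.2 fun hvs => by_contra fun hsv => ?_⟩
  have hvs' : A v s := (htot s hsS v hv (Ne.symm hvs)).resolve_left hsv
  have hsub : {x ∈ S | A s x} ⊆ {x ∈ S | A v x} := fun x hx =>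
    ⟨hx.1, htrans v hv s hsS x hx.1 hvs' hx.2⟩
  have hss : A s s := (hmax hv hsub ⟨hsS, hvs'⟩).2
  exact hA s s hss hss

/-- The vertex `y` locates a place on the circle for `w`: just before `y` in the first case, just
before the antipode of `y` in the second. -/
lemma exists_pivot (hA : IsOrientedGraph A) (hlt : IsLocallyTransitive A) {S : Set V}
    (hS : S.Finite) (hne : S.Nonempty) {w : V} (hwS : ∀ v ∈ S, A w v ∨ A v w)
    (htot : ∀ u ∈ S, ∀ v ∈ S, u ≠ v → A u v ∨ A v u) :
    ∃ y ∈ S, ((∀ v ∈ S, A w v → v = y ∨ A y v) ∧ ∀ v ∈ S, A v w → A v y) ∨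
      ((∀ v ∈ S, A v w → v = y ∨ A y v) ∧ ∀ v ∈ S, A w v → A v y) := by
  have source : ∀ N ⊆ S, N.Nonempty → (∀ x ∈ N, ∀ y ∈ N, ∀ z ∈ N, A x y → A y z → A x z) →
      ∃ s ∈ N, ∀ v ∈ N, v = s ∨ A s v := fun N hN hNne htrans =>
    exists_source hA (hS.subset hN) hNne (fun u hu v hv => htot u (hN hu) v (hN hv)) htrans
  have ne_of_out_in : ∀ {u v}, A w u → A v w → u ≠ v := by
    rintro u v hwu hvw rfl
    exact hA _ _ hwu hvw
  have source_in : ∀ z ∈ S, A z w → ∃ z₀ ∈ {v ∈ S | A v w}, ∀ v ∈ {v ∈ S | A v w},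
      v = z₀ ∨ A z₀ v := fun z hzS hzw =>
    source _ (Set.sep_subset _ _) ⟨z, hzS, hzw⟩ fun x hx y hy z hz => hlt.2 w x y z hx.2 hy.2 hz.2
  by_cases hO : ∃ s ∈ S, A w s
  · obtain ⟨s, ⟨hsS, hws⟩, hs⟩ := source {v ∈ S | A w v} (Set.sep_subset _ _) hO
      fun x hx y hy z hz => hlt.1 w x y z hx.2 hy.2 hz.2
    by_cases hIs : ∀ z ∈ S, A z w → A z s
    · exact ⟨s, hsS, Or.inl ⟨fun v hv hwv => hs v ⟨hv, hwv⟩, hIs⟩⟩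
    push Not at hIs
    obtain ⟨z, hzS, hzw, hzs⟩ := hIs
    obtain ⟨z₀, ⟨hz₀S, hz₀w⟩, hz₀⟩ := source_in z hzS hzw
    have hsz : A s z := (htot s hsS z hzS (ne_of_out_in hws hzw)).resolve_right hzs
    -- otherwise `s, z, w` would be a 3-cycle in the out-neighbourhood of `z₀`
    have hsz₀ : A s z₀ := by
      rcases hz₀ z ⟨hzS, hzw⟩ with rfl | hz₀z
      · exact hsz
      by_contra h
      have hz₀s := (htot s hsS z₀ hz₀S (ne_of_out_in hws hz₀w)).resolve_left h
      exact hA w s hws (hlt.1 z₀ s z w hz₀s hz₀z hz₀w hsz hzw)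
    refine ⟨z₀, hz₀S, Or.inr ⟨fun v hv hvw => hz₀ v ⟨hv, hvw⟩, fun b hbS hwb => ?_⟩⟩
    rcases hs b ⟨hbS, hwb⟩ with rfl | hsb
    · exact hsz₀
    -- otherwise `w, s, z₀` would be a 3-cycle in the in-neighbourhood of `b`
    by_contra h
    have hz₀b := (htot b hbS z₀ hz₀S (ne_of_out_in hwb hz₀w)).resolve_left h
    exact hA z₀ w hz₀w (hlt.2 b w s z₀ hwb hsb hz₀b hws hsz₀)
  · push Not at hO
    obtain ⟨v, hv⟩ := hne
    obtain ⟨z₀, ⟨hz₀S, -⟩, hz₀⟩ := source_in v hv ((hwS v hv).resolve_left (hO v hv))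
    exact ⟨z₀, hz₀S, Or.inr ⟨fun v hv hvw => hz₀ v ⟨hv, hvw⟩, fun b hb hwb => absurd hwb (hO b hb)⟩⟩

lemma exists_circArc_extension (hA : IsOrientedGraph A) (hlt : IsLocallyTransitive A)
    {S : Set V} (hS : S.Finite) {w : V} (hwS : ∀ v ∈ S, A w v ∨ A v w)
    (htot : ∀ u ∈ S, ∀ v ∈ S, u ≠ v → A u v ∨ A v u)
    (p : V → ℚ) (hp : ∀ u ∈ S, ∀ v ∈ S, A u v → circArc (p u) (p v)) :
    ∃ x, ∀ v ∈ S, (A w v → circArc x (p v)) ∧ (A v w → circArc (p v) x) := by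
  rcases S.eq_empty_or_nonempty with rfl | hne
  · exact ⟨0, by simp⟩
  suffices ∃ c, (∀ v ∈ S, A w v → fract (p v - c) < 1/2) ∧
      ∀ v ∈ S, A v w → 1/2 ≤ fract (p v - c) by
    obtain ⟨c, hO, hI⟩ := this
    obtain ⟨x, hxO, hxI⟩ := exists_circArc_between ((hS.sep (A w ·)).image p)
      ((hS.sep (A · w)).image p) c (Set.forall_mem_image.2 fun v hv => hO v hv.1 hv.2)
      (Set.forall_mem_image.2 fun v hv => hI v hv.1 hv.2)
    exact ⟨x, fun v hv => ⟨fun h => hxO _ ⟨v, ⟨hv, h⟩, rfl⟩, fun h => hxI _ ⟨v, ⟨hv, h⟩, rfl⟩⟩⟩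
  obtain ⟨y, hyS, ⟨hO, hI⟩ | ⟨hI, hO⟩⟩ := exists_pivot hA hlt hS hne hwS htot
  · refine ⟨p y, fun v hv hwv => ?_, fun v hv hvw => ?_⟩
    · exact fract_sub_lt_half_of_eq_or_circArc ((hO v hv hwv).imp (congrArg p) (hp y hyS v hv))
    · exact (half_lt_fract_sub_of_circArc (hp v hv y hyS (hI v hv hvw))).le
  · refine ⟨p y + 1/2, fun v hv hwv => ?_, fun v hv hvw => ?_⟩
    · rw [← sub_sub, fract_sub_half_lt_half_iff]
      exact (half_lt_fract_sub_of_circArc (hp v hv y hyS (hO v hv hwv))).le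
    · rw [← sub_sub, ← not_lt, fract_sub_half_lt_half_iff, not_le]
      exact fract_sub_lt_half_of_eq_or_circArc ((hI v hv hvw).imp (congrArg p) (hp y hyS v hv))

theorem exists_circArc_embedding (hA : IsOrientedGraph A) (hlt : IsLocallyTransitive A)
    {S : Set V} (hS : S.Finite) (htot : ∀ u ∈ S, ∀ v ∈ S, u ≠ v → A u v ∨ A v u) :
    ∃ p : V → ℚ, ∀ u ∈ S, ∀ v ∈ S, A u v → circArc (p u) (p v) := by
  classical
  induction S, hS using Set.Finite.induction_on with
  | empty => exact ⟨0, by simp⟩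
  | @insert w S hw hS ih =>
    have htotS : ∀ u ∈ S, ∀ v ∈ S, u ≠ v → A u v ∨ A v u := fun u hu v hv =>
      htot u (Set.mem_insert_of_mem w hu) v (Set.mem_insert_of_mem w hv)
    obtain ⟨p, hp⟩ := ih htotS
    obtain ⟨x, hx⟩ := exists_circArc_extension hA hlt hS (fun v hv =>
      htot w (Set.mem_insert w S) v (Set.mem_insert_of_mem w hv) (ne_of_mem_of_not_mem hv hw).symm)
      htotS p hp
    have hupd : ∀ v ∈ S, Function.update p w x v = p v := fun v hv =>
      Function.update_of_ne (ne_of_mem_of_not_mem hv hw) _ _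
    refine ⟨Function.update p w x, ?_⟩
    rintro u (rfl | hu) v (rfl | hv) huv
    · exact absurd huv (hA _ _ huv)
    · rw [Function.update_self, hupd v hv]
      exact (hx v hv).1 huv
    · rw [Function.update_self, hupd u hu]
      exact (hx u hu).2 huv
    · rw [hupd u hu, hupd v hv]
      exact hp u hu v hv huv

end

/-- If the arcs of a partially oriented complete graph induce
two vertex-disjoint locally transitive tournaments covering all the vertices
(one on `S`, one on its complement), with no arc between them, then the graph
can be completed to a locally transitive tournament. -/
theorem stmt_13 {V : Type*} [Fintype V] (A : V → V → Prop) (S : Set V)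
    (hA : IsOrientedGraph A)
    (hsep : ∀ u v : V, A u v → (u ∈ S ↔ v ∈ S))
    (htour₁ : ∀ u ∈ S, ∀ v ∈ S, u ≠ v → A u v ∨ A v u)
    (htour₂ : ∀ u ∈ Sᶜ, ∀ v ∈ Sᶜ, u ≠ v → A u v ∨ A v u)
    (hlt : IsLocallyTransitive A) :
    ∃ T : V → V → Prop, CompletesToTournament A T ∧ IsLocallyTransitive T := by
  classical
  obtain ⟨p, hp⟩ := exists_circArc_embedding hA hlt S.toFinite htour₁
  obtain ⟨q, hq⟩ := exists_circArc_embedding hA hlt Sᶜ.toFinite htour₂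
  obtain ⟨ε, hε⟩ := exists_add_circArc_total (S.toFinite.image p) (Sᶜ.toFinite.image q)
  let P : V → ℚ := fun v => if v ∈ S then p v else q v + ε
  have hAP : ∀ u v, A u v → circArc (P u) (P v) := by
    intro u v huv
    by_cases hu : u ∈ S
    · have hv := (hsep u v huv).1 hu
      simpa [P, hu, hv] using hp u hu v hv huv
    · have hv : v ∉ S := fun hv => hu ((hsep u v huv).2 hv)
      simpa [P, hu, hv, circArc_add_right] using hq u hu v hv huv
  have htotP : ∀ u v, u ≠ v → circArc (P u) (P v) ∨ circArc (P v) (P u) := by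
    intro u v huv
    by_cases hu : u ∈ S <;> by_cases hv : v ∈ S
    · exact (htour₁ u hu v hv huv).imp (hAP u v) (hAP v u)
    · simpa [P, hu, hv] using hε _ ⟨u, hu, rfl⟩ _ ⟨v, hv, rfl⟩
    · simpa [P, hu, hv, or_comm] using hε _ ⟨v, hv, rfl⟩ _ ⟨u, hu, rfl⟩
    · exact (htour₂ u hu v hv huv).imp (hAP u v) (hAP v u)
  refine ⟨fun u v => circArc (P u) (P v), ⟨hAP, fun u v h h' => circArc_asymm h (hAP v u h'),
    fun u v => circArc_asymm, htotP⟩, isLocallyTransitive_circArc.comap P⟩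
end
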